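/- For every integer k > 4, the first player wins Building Nim BN(2^k − 2, 5); formally, BNwins (fun _ : Fin 5 => 0) (2^k − 2) for all k > 4. -/

import Mathlib

instance : Std.Commutative (fun x y : ℕ => x ^^^ y) := ⟨Nat.xor_comm⟩
instance : Std.Associative (fun x y : ℕ => x ^^^ y) := ⟨Nat.xor_assoc⟩

/-- `BNwins s r` holds iff the player to move wins Building Nim from position `s`
(the stack heights) with `r` tokens remaining to be placed. When no tokens remain,
Nim play starts, and by Bouton's theorem the player to move wins iff the
Nim-sum (bitwise XOR) of the stack heights is nonzero. -/
def BNwins {ℓ : ℕ} : (Fin ℓ → ℕ) → ℕ → Prop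
  | s, 0 => Finset.univ.fold (fun x y : ℕ => x ^^^ y) 0 s ≠ 0
  | s, r + 1 => ∃ i : Fin ℓ, ¬ BNwins (Function.update s i (s i + 1)) r

/-!
Only the heights modulo `8` are tracked. With no tokens left the player to move wins as soon as
the low three bits of the nim-sum do not all vanish; propagating this backwards one round (a move
of each player) at a time yields, for each `m`, a set of residue vectors in `(ℤ/8)⁵` from which
the player to move wins with `2 * m` tokens left. Storing such a set as the bits of a `2 ^ 15`-bit
number turns a round into a few shifts and masks, and the kernel checks that after nine rounds
every residue vector is covered: the player to move wins from any position with `18` tokens left.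
Winning everywhere with `r` tokens left implies winning everywhere with `r + 2` (move anywhere;
every reply leads to a won position), and `2 ^ k - 2` is even and at least `18`.
-/

open Finset

namespace Nat

theorem testBit_mul_geom_sum_two_pow {P B : ℕ} (hB : B < 2 ^ P) {T j : ℕ} (hj : j < P * T) :
    (B * ∑ t ∈ range T, (2 ^ P) ^ t).testBit j = B.testBit (j % P) := by
  induction T generalizing j with
  | zero => simp at hj
  | succ T ih =>
    have hsplit : B * ∑ t ∈ range (T + 1), (2 ^ P) ^ t =
        2 ^ P * (B * ∑ t ∈ range T, (2 ^ P) ^ t) + B := by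
      rw [sum_range_succ', pow_zero, mul_add, mul_one, mul_sum, mul_sum, mul_sum]
      congr 1
      refine sum_congr rfl fun t _ => ?_
      ring
    rw [hsplit, testBit_two_pow_mul_add _ hB]
    split_ifs with hjP
    · rw [mod_eq_of_lt hjP]
    · rw [ih (by rw [mul_succ] at hj; omega), ← mod_eq_sub_mod (not_lt.mp hjP)]

theorem testBit_two_pow_sub_one_mul_two_pow (p q r : ℕ) :
    ((2 ^ p - 1) * 2 ^ q).testBit r = decide (q ≤ r ∧ r < q + p) := by
  rw [testBit_mul_two_pow, testBit_two_pow_sub_one]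
  by_cases h : q ≤ r <;> simp [h]; omega

theorem testBit_fold_or {ι : Type*} (S : Finset ι) (f : ι → ℕ) (j : ℕ) :
    (S.fold (fun x y : ℕ => x ||| y) 0 f).testBit j = true ↔ ∃ i ∈ S, (f i).testBit j = true := by
  classical
  induction S using Finset.induction_on with
  | empty => simp
  | insert i S hi ih => simp [fold_insert hi, testBit_or, ih]

theorem testBit_fold_and {ι : Type*} (S : Finset ι) (a : ℕ) (f : ι → ℕ) (j : ℕ) :
    (S.fold (fun x y : ℕ => x &&& y) a f).testBit j = true ↔
      a.testBit j = true ∧ ∀ i ∈ S, (f i).testBit j = true := by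
  classical
  induction S using Finset.induction_on with
  | empty => simp
  | insert i S hi ih =>
    simp only [fold_insert hi, testBit_and, Bool.and_eq_true, ih, mem_insert, forall_eq_or_imp]
    tauto

theorem testBit_fold_xor_congr {ι : Type*} {S : Finset ι} {f g : ι → ℕ} {j k : ℕ}
    (h : ∀ i ∈ S, (f i).testBit j = (g i).testBit k) :
    (S.fold (fun x y : ℕ => x ^^^ y) 0 f).testBit j =
      (S.fold (fun x y : ℕ => x ^^^ y) 0 g).testBit k := by
  classical
  induction S using Finset.induction_on with
  | empty => simp
  | insert i S hi ih =>
    rw [fold_insert hi, fold_insert hi, testBit_xor, testBit_xor, h i (mem_insert_self i S),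
      ih fun i' hi' => h i' (mem_insert_of_mem hi')]

end Nat

namespace BuildingNim

def repeatBlock (N P B : ℕ) : ℕ := B * ((2 ^ N - 1) / (2 ^ P - 1))

theorem testBit_repeatBlock {N P B j : ℕ} (hP : 0 < P) (hPN : P ∣ N) (hB : B < 2 ^ P)
    (hj : j < N) : (repeatBlock N P B).testBit j = B.testBit (j % P) := by
  obtain ⟨T, rfl⟩ := hPN
  rw [repeatBlock, pow_mul, ← Nat.geomSum_eq (Nat.le_self_pow hP.ne' 2),
    Nat.testBit_mul_geom_sum_two_pow hB hj]

def topDigitMask (N p m : ℕ) : ℕ := repeatBlock N (m * p) ((2 ^ p - 1) * 2 ^ ((m - 1) * p))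

theorem testBit_topDigitMask {N p m j : ℕ} (hp : 0 < p) (hm : 0 < m) (hN : m * p ∣ N)
    (hj : j < N) : (topDigitMask N p m).testBit j = decide (j / p % m = m - 1) := by
  have hmp : (m - 1) * p + p = m * p := by
    conv_rhs => rw [← Nat.sub_add_cancel hm]
    ring
  have hB : (2 ^ p - 1) * 2 ^ ((m - 1) * p) < 2 ^ (m * p) := by
    rw [← hmp, pow_add, mul_comm]
    exact Nat.mul_lt_mul_of_pos_left (by have := Nat.one_le_two_pow (n := p); omega)
      (by positivity)
  rw [topDigitMask, testBit_repeatBlock (Nat.mul_pos hm hp) hN hB hj,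
    Nat.testBit_two_pow_sub_one_mul_two_pow, hmp, ← Nat.mod_mul_right_div_self, mul_comm p m,
    decide_eq_decide, Nat.div_eq_iff hp]
  have := Nat.mod_lt j (Nat.mul_pos hm hp)
  omega

def cycleDigit (p m j : ℕ) : ℕ := if j / p % m = m - 1 then j - (m - 1) * p else j + p

-- Bits whose digit is below `m - 1` are fetched from `p` places up, the others from
-- `(m - 1) * p` places down.
def preimageCycleDigit (N p m X : ℕ) : ℕ :=
  ((X >>> p) &&& ((2 ^ N - 1) ^^^ topDigitMask N p m)) |||
    ((X <<< ((m - 1) * p)) &&& topDigitMask N p m)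

theorem testBit_preimageCycleDigit {N p m j : ℕ} (X : ℕ) (hp : 0 < p) (hm : 0 < m)
    (hN : m * p ∣ N) (hj : j < N) :
    (preimageCycleDigit N p m X).testBit j = X.testBit (cycleDigit p m j) := by
  rw [preimageCycleDigit, cycleDigit, Nat.testBit_or, Nat.testBit_and, Nat.testBit_and,
    Nat.testBit_xor, Nat.testBit_shiftRight, Nat.testBit_shiftLeft, Nat.testBit_two_pow_sub_one,
    testBit_topDigitMask hp hm hN hj]
  split_ifs with htop
  · have hle : (m - 1) * p ≤ j :=
      calc (m - 1) * p = j / p % m * p := by rw [htop]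
        _ ≤ j / p * p := Nat.mul_le_mul_right p (Nat.mod_le _ _)
        _ ≤ j := Nat.div_mul_le_self j p
    simp [htop, hle, hj]
  · simp [htop, hj, Nat.add_comm p j]

def code (b : ℕ) {ℓ : ℕ} (s : Fin ℓ → ℕ) : ℕ := ∑ i, s i % 2 ^ b * 2 ^ (b * i)

variable {b ℓ : ℕ}

theorem code_succ (s : Fin (ℓ + 1) → ℕ) :
    code b s = s 0 % 2 ^ b + 2 ^ b * code b (Fin.tail s) := by
  rw [code, code, Fin.sum_univ_succ, mul_sum]
  simp only [Fin.val_zero, mul_zero, pow_zero, mul_one, Fin.val_succ, Fin.tail]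
  congr 1
  refine sum_congr rfl fun i _ => ?_
  ring

theorem code_lt (s : Fin ℓ → ℕ) : code b s < 2 ^ (b * ℓ) := by
  induction ℓ with
  | zero => simp [code]
  | succ ℓ ih =>
    have h0 := Nat.mod_lt (s 0) (Nat.two_pow_pos b)
    calc code b s < 2 ^ b * (code b (Fin.tail s) + 1) := by rw [code_succ]; nlinarith
      _ ≤ 2 ^ b * 2 ^ (b * ℓ) := Nat.mul_le_mul_left _ (ih _)
      _ = 2 ^ (b * (ℓ + 1)) := by ring

theorem code_div_mod (s : Fin ℓ → ℕ) (i : Fin ℓ) :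
    code b s / 2 ^ (b * i) % 2 ^ b = s i % 2 ^ b := by
  induction ℓ with
  | zero => exact i.elim0
  | succ ℓ ih =>
    rw [code_succ]
    cases i using Fin.cases with
    | zero => simp
    | succ i =>
      have h0 := Nat.mod_lt (s 0) (Nat.two_pow_pos b)
      rw [Fin.val_succ, Nat.mul_succ, pow_add, mul_comm (2 ^ (b * i)), ← Nat.div_div_eq_div_mul,
        Nat.add_mul_div_left _ _ (Nat.two_pow_pos b), Nat.div_eq_of_lt h0, zero_add, ih]
      rfl

theorem testBit_code (s : Fin ℓ → ℕ) (i : Fin ℓ) {c : ℕ} (hc : c < b) :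
    (code b s).testBit (b * i + c) = (s i).testBit c := by
  have digit := congrArg (Nat.testBit · c) (code_div_mod (b := b) s i)
  simp only [Nat.testBit_mod_two_pow, hc, decide_true, Bool.true_and, Nat.testBit_div_two_pow]
    at digit
  rwa [add_comm]

theorem code_update_add (s : Fin ℓ → ℕ) (i : Fin ℓ) (v : ℕ) :
    code b (Function.update s i v) + s i % 2 ^ b * 2 ^ (b * i) =
      code b s + v % 2 ^ b * 2 ^ (b * i) := by
  have hrest : ∑ j ∈ univ.erase i, Function.update s i v j % 2 ^ b * 2 ^ (b * j) =
      ∑ j ∈ univ.erase i, s j % 2 ^ b * 2 ^ (b * j) :=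
    sum_congr rfl fun j hj => by rw [Function.update_of_ne (ne_of_mem_erase hj)]
  rw [code, code, ← add_sum_erase _ _ (mem_univ i), ← add_sum_erase _ _ (mem_univ i), hrest,
    Function.update_self]
  ring

theorem cycleDigit_code (s : Fin ℓ → ℕ) (i : Fin ℓ) :
    cycleDigit (2 ^ (b * i)) (2 ^ b) (code b s) = code b (Function.update s i (s i + 1)) := by
  have hupd := code_update_add (b := b) s i (s i + 1)
  have hlt := Nat.mod_lt (s i) (Nat.two_pow_pos b)
  rw [cycleDigit, code_div_mod]
  split_ifs with htop
  · have hwrap : (s i + 1) % 2 ^ b = 0 := by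
      rw [← Nat.mod_add_mod, htop, Nat.sub_add_cancel Nat.one_le_two_pow, Nat.mod_self]
    rw [hwrap, htop, zero_mul] at hupd
    omega
  · have hnowrap : (s i + 1) % 2 ^ b = s i % 2 ^ b + 1 := by
      rw [← Nat.mod_add_mod]
      exact Nat.mod_eq_of_lt (by omega)
    rw [hnowrap, add_one_mul] at hupd
    omega

def preimageMove (b ℓ : ℕ) (i : Fin ℓ) (X : ℕ) : ℕ :=
  preimageCycleDigit (2 ^ (b * ℓ)) (2 ^ (b * i)) (2 ^ b) X

theorem testBit_preimageMove_code (X : ℕ) (s : Fin ℓ → ℕ) (i : Fin ℓ) :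
    (preimageMove b ℓ i X).testBit (code b s) =
      X.testBit (code b (Function.update s i (s i + 1))) := by
  have hdvd : 2 ^ b * 2 ^ (b * i) ∣ 2 ^ (b * ℓ) := by
    rw [← pow_add]
    exact pow_dvd_pow 2 (by nlinarith [i.isLt])
  rw [preimageMove, testBit_preimageCycleDigit X (Nat.two_pow_pos _) (Nat.two_pow_pos _) hdvd
    (code_lt s), cycleDigit_code]

def canMoveInto (b ℓ X : ℕ) : ℕ :=
  univ.fold (fun x y : ℕ => x ||| y) 0 fun i : Fin ℓ => preimageMove b ℓ i X

def mustMoveInto (b ℓ X : ℕ) : ℕ :=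
  univ.fold (fun x y : ℕ => x &&& y) (2 ^ 2 ^ (b * ℓ) - 1) fun i : Fin ℓ => preimageMove b ℓ i X

-- Bit `j` is set iff the base-`2 ^ b` digits of `j` have a nonzero nim-sum.
def nimSumMask (b ℓ : ℕ) : ℕ :=
  (range b).fold (fun x y : ℕ => x ||| y) 0 fun c =>
    univ.fold (fun x y : ℕ => x ^^^ y) 0 fun i : Fin ℓ =>
      topDigitMask (2 ^ (b * ℓ)) (2 ^ (b * i + c)) 2

def winMask (b ℓ : ℕ) : ℕ → ℕ
  | 0 => nimSumMask b ℓ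
  | m + 1 => canMoveInto b ℓ (mustMoveInto b ℓ (winMask b ℓ m))

theorem fold_xor_ne_zero_of_testBit_nimSumMask {s : Fin ℓ → ℕ}
    (h : (nimSumMask b ℓ).testBit (code b s) = true) :
    univ.fold (fun x y : ℕ => x ^^^ y) 0 s ≠ 0 := by
  obtain ⟨c, hc, hbit⟩ := (Nat.testBit_fold_or _ _ _).mp h
  rw [mem_range] at hc
  have hdigits : ∀ i ∈ (univ : Finset (Fin ℓ)),
      (topDigitMask (2 ^ (b * ℓ)) (2 ^ (b * i + c)) 2).testBit (code b s) = (s i).testBit c := by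
    intro i _
    have hdvd : 2 * 2 ^ (b * i + c) ∣ 2 ^ (b * ℓ) := by
      rw [← pow_succ']
      exact pow_dvd_pow 2 (by nlinarith [i.isLt])
    rw [testBit_topDigitMask (Nat.two_pow_pos _) two_pos hdvd (code_lt s), ← testBit_code s i hc,
      Nat.testBit_eq_decide_div_mod_eq]
    rfl
  rw [Nat.testBit_fold_xor_congr hdigits] at hbit
  intro hzero
  rw [hzero, Nat.zero_testBit] at hbit
  exact Bool.false_ne_true hbit

theorem BNwins_of_testBit_winMask {m : ℕ} {s : Fin ℓ → ℕ}
    (h : (winMask b ℓ m).testBit (code b s) = true) : BNwins s (2 * m) := by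
  induction m generalizing s with
  | zero => exact fold_xor_ne_zero_of_testBit_nimSumMask h
  | succ m ih =>
    rw [winMask, canMoveInto, Nat.testBit_fold_or] at h
    obtain ⟨i, -, hi⟩ := h
    rw [testBit_preimageMove_code, mustMoveInto, Nat.testBit_fold_and] at hi
    refine ⟨i, fun ⟨i', hi'⟩ => hi' (ih ?_)⟩
    rw [← testBit_preimageMove_code]
    exact hi.2 i' (mem_univ i')

theorem winMask_three_five_nine : winMask 3 5 9 = 2 ^ 2 ^ (3 * 5) - 1 := by decide +kernel

theorem BNwins_eighteen (s : Fin 5 → ℕ) : BNwins s 18 :=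
  BNwins_of_testBit_winMask (b := 3) (m := 9) <| by
    rw [winMask_three_five_nine, Nat.testBit_two_pow_sub_one, decide_eq_true_eq]
    exact code_lt s

theorem BNwins_add_two [NeZero ℓ] {r : ℕ} (h : ∀ s : Fin ℓ → ℕ, BNwins s r) (s : Fin ℓ → ℕ) :
    BNwins s (r + 2) :=
  ⟨0, fun ⟨_, hreply⟩ => hreply (h _)⟩

theorem BNwins_add_two_mul [NeZero ℓ] {r : ℕ} (h : ∀ s : Fin ℓ → ℕ, BNwins s r) (m : ℕ)
    (s : Fin ℓ → ℕ) : BNwins s (r + 2 * m) := by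
  induction m generalizing s with
  | zero => exact h s
  | succ m ih => exact BNwins_add_two ih s

end BuildingNim

/-- For every `k > 4`, the first player wins `BN(2 ^ k - 2, 5)`. -/
theorem first_player_wins_pow_two_sub_two (k : ℕ) (hk : 4 < k) :
    BNwins (fun _ : Fin 5 => 0) (2 ^ k - 2) := by
  have hbig : 2 ^ 5 ≤ 2 ^ k := Nat.pow_le_pow_right two_pos hk
  obtain ⟨t, ht⟩ : Even (2 ^ k) := (Nat.even_pow' (by omega)).mpr even_two
  obtain ⟨m, hm⟩ : ∃ m, 2 ^ k - 2 = 18 + 2 * m := ⟨t - 10, by omega⟩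
  rw [hm]
  exact BuildingNim.BNwins_add_two_mul BuildingNim.BNwins_eighteen m _
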